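/- Let d ≥ 1 and let f_0, f_1, ..., f_d : [0,∞) → [0,∞) be differentiable functions with f_0(t) = 1 for all t, f_i(0) = 0 for 1 ≤ i ≤ d, and satisfying f_i'(t) ≤ 3 f_{i-1}(t) + 2 f_{i+1}(t) for 1 ≤ i ≤ d-1 and f_d'(t) ≤ 3 f_{d-1}(t), together with the bound f_i(t) ≤ 4i for all i ≥ 1 and t ≥ 0. Then f_d(d/(10e)) ≤ 4d/2^d. -/

import Mathlib

/-- Differential-inequality bound on the expected number of tiles at distance `d`
from the seed: under the stated system of differential inequalities,
`f d (d/(10e)) ≤ 4d/2^d`. -/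
theorem stmt_2 (d : ℕ) (hd : 1 ≤ d) (f : ℕ → ℝ → ℝ)
    (hdiff : ∀ i ≤ d, Differentiable ℝ (f i))
    (hnonneg : ∀ i ≤ d, ∀ t : ℝ, 0 ≤ t → 0 ≤ f i t)
    (h0 : ∀ t : ℝ, f 0 t = 1)
    (hinit : ∀ i, 1 ≤ i → i ≤ d → f i 0 = 0)
    (hode : ∀ i, 1 ≤ i → i ≤ d - 1 → ∀ t : ℝ, 0 ≤ t →
      deriv (f i) t ≤ 3 * f (i - 1) t + 2 * f (i + 1) t)
    (hoded : ∀ t : ℝ, 0 ≤ t → deriv (f d) t ≤ 3 * f (d - 1) t)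
    (hbound : ∀ i, 1 ≤ i → i ≤ d → ∀ t : ℝ, 0 ≤ t → f i t ≤ 4 * i) :
    f d ((d : ℝ) / (10 * Real.exp 1)) ≤ 4 * d / 2 ^ d := by
  -- Key: for all m ≤ i ≤ d, f i t ≤ 4d·5^m·t^m/m!
  have key : ∀ m : ℕ, ∀ i ≤ d, m ≤ i → ∀ t : ℝ, 0 ≤ t →
      f i t ≤ 4 * d * 5 ^ m * t ^ m / (Nat.factorial m) := by
    intro m
    induction m with
    | zero =>
      intro i hid _ t ht
      simp only [pow_zero, Nat.factorial_zero, Nat.cast_one, mul_one, div_one]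
      rcases Nat.eq_zero_or_pos i with hi | hi
      · subst hi
        rw [h0 t]
        have : (1 : ℝ) ≤ (d : ℝ) := by exact_mod_cast hd
        nlinarith
      · have hb := hbound i hi hid t ht
        have hcast : (i : ℝ) ≤ (d : ℝ) := by exact_mod_cast hid
        nlinarith
    | succ m ih =>
      intro i hid him t ht
      have hi1 : 1 ≤ i := le_trans (Nat.succ_le_succ (Nat.zero_le m)) him
      set C : ℝ := 4 * d * 5 ^ (m + 1) / (Nat.factorial m) with hC
      have hfm : (0:ℝ) < (Nat.factorial m : ℝ) := by exact_mod_cast Nat.factorial_pos m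
      have hCpos : 0 ≤ C := by rw [hC]; positivity
      have hder : ∀ s : ℝ, 0 ≤ s → deriv (f i) s ≤ C * s ^ m := by
        intro s hs
        set A : ℝ := 4 * d * 5 ^ m * s ^ m / (Nat.factorial m) with hA'
        have hApos : 0 ≤ A := by rw [hA']; positivity
        have hCA : C * s ^ m = 5 * A := by
          rw [hC, hA']
          field_simp
          ring
        have hA : ∀ j ≤ d, m ≤ j → f j s ≤ A := fun j hj hmj => ih j hj hmj s hs
        rw [hCA]
        rcases eq_or_lt_of_le hid with hidd | hlt
        · have hder1 := hoded s hs
          rw [← hidd] at hder1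
          have hA1 := hA (i - 1) (by omega) (by omega)
          linarith
        · have hder1 := hode i hi1 (by omega) s hs
          have hA1 := hA (i - 1) (by omega) (by omega)
          have hA2 := hA (i + 1) (by omega) (by omega)
          linarith
      -- integrate: compare with g s = C/(m+1) * s^(m+1)
      set g : ℝ → ℝ := fun s => C / (m + 1) * s ^ (m + 1) - f i s with hg
      have hgd : Differentiable ℝ g := by
        apply Differentiable.sub
        · exact (differentiable_pow (m+1)).const_mul _
        · exact hdiff i hid
      have hmono : MonotoneOn g (Set.Ici (0:ℝ)) := by
        apply monotoneOn_of_deriv_nonneg (convex_Ici 0) hgd.continuous.continuousOn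
          hgd.differentiableOn
        intro x hx
        rw [interior_Ici] at hx
        have hx0 : (0:ℝ) ≤ x := le_of_lt hx
        have hdg : deriv g x = C * x ^ m - deriv (f i) x := by
          rw [hg]
          rw [deriv_fun_sub ((differentiable_pow (m+1)).const_mul _ |>.differentiableAt)
            ((hdiff i hid).differentiableAt)]
          congr 1
          rw [deriv_const_mul _ ((differentiable_pow (m+1)).differentiableAt)]
          rw [deriv_pow_field]
          push_cast
          field_simp
        rw [hdg, sub_nonneg]
        exact hder x hx0
      have h0t : g 0 ≤ g t := hmono (Set.self_mem_Ici) (Set.mem_Ici.mpr ht) ht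
      have hg0 : g 0 = 0 := by
        rw [hg]
        simp [hinit i hi1 hid, zero_pow (Nat.succ_ne_zero m)]
      rw [hg0, hg] at h0t
      simp only [sub_nonneg] at h0t
      have hfs : (Nat.factorial (m+1) : ℝ) = (m + 1) * (Nat.factorial m) := by
        push_cast [Nat.factorial_succ]
        ring
      have hm1 : (0:ℝ) < (m:ℝ) + 1 := by positivity
      calc f i t ≤ C / (m + 1) * t ^ (m + 1) := h0t
        _ = 4 * d * 5 ^ (m + 1) * t ^ (m + 1) / (Nat.factorial (m + 1)) := by
            rw [hC, hfs]
            rw [div_div, div_mul_eq_mul_div]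
            rw [mul_comm ((Nat.factorial m : ℝ)) ((m:ℝ) + 1)]
  -- apply with m = i = d, t = d/(10e)
  have he : (0:ℝ) < Real.exp 1 := Real.exp_pos 1
  have ht0 : (0:ℝ) ≤ (d : ℝ) / (10 * Real.exp 1) := by positivity
  have hkey := key d d le_rfl le_rfl ((d : ℝ) / (10 * Real.exp 1)) ht0
  have hfact : ((d : ℝ)) ^ d / (Nat.factorial d) ≤ Real.exp 1 ^ d := by
    have := Real.pow_div_factorial_le_exp (x := (d:ℝ)) (Nat.cast_nonneg d) d
    rwa [← Real.exp_one_rpow (d:ℝ), Real.rpow_natCast] at this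
  refine hkey.trans ?_
  have hfd : (0:ℝ) < (Nat.factorial d : ℝ) := by exact_mod_cast Nat.factorial_pos d
  have hexp : (0:ℝ) < Real.exp 1 ^ d := by positivity
  have hdd : ((d:ℝ)) ^ d ≤ Real.exp 1 ^ d * (Nat.factorial d) := by
    rw [div_le_iff₀ hfd] at hfact
    linarith [hfact]
  have h10 : (10:ℝ) ^ d = 5 ^ d * 2 ^ d := by rw [← mul_pow]; norm_num
  have h5 : ((5:ℝ)) ^ d ≠ 0 := by positivity
  have h2 : ((2:ℝ)) ^ d ≠ 0 := by positivity
  have he' : Real.exp 1 ^ d ≠ 0 := ne_of_gt hexp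
  have hL : 4 * (d:ℝ) * 5 ^ d * ((d:ℝ) / (10 * Real.exp 1)) ^ d * 2 ^ d
      = 4 * (d:ℝ) * ((d:ℝ) ^ d / Real.exp 1 ^ d) := by
    rw [div_pow, mul_pow, h10]
    field_simp
  rw [div_le_div_iff₀ hfd (by positivity : (0:ℝ) < 2 ^ d), hL]
  have hstep : ((d:ℝ)) ^ d / Real.exp 1 ^ d ≤ (Nat.factorial d : ℝ) := by
    rw [div_le_iff₀ hexp]
    nlinarith [hdd]
  have hd4 : (0:ℝ) ≤ 4 * (d:ℝ) := by positivity
  nlinarith [mul_le_mul_of_nonneg_left hstep hd4]
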